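/- arXiv:1006.5174 — 2 statements merged into one kernel-verified Lean document; each statement's English description precedes it below -/
import Mathlib

section
/- Define h on the punctured plane ℂ∖{0} by h(z) = z/|z| for 0 < |z| ≤ 1 and h(z) = (z + 1/z̄)/2 for |z| ≥ 1. Then h is continuous, lies in W^{1,2}_{loc}(ℂ∖{0}), and its Hopf differential satisfies h_z(z) · conj(h_{z̄}(z)) = −1/(4z²) for almost every z ∈ ℂ∖{0}; in particular the Hopf differential is holomorphic, yet h is not harmonic on the unit disk minus the origin. -/
open MeasureTheory Complex

/-- The Laplacian of a function on `ℂ ≃ ℝ²`. -/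
noncomputable def lap {E : Type*} [NormedAddCommGroup E] [NormedSpace ℝ E]
    (u : ℂ → E) (x : ℂ) : E :=
  fderiv ℝ (fun y => fderiv ℝ u y 1) x 1 +
    fderiv ℝ (fun y => fderiv ℝ u y Complex.I) x Complex.I

/-- Harmonic on a set: twice continuously differentiable with vanishing Laplacian. -/
def HarmonicOn {E : Type*} [NormedAddCommGroup E] [NormedSpace ℝ E]
    (u : ℂ → E) (s : Set ℂ) : Prop :=
  ContDiffOn ℝ 2 u s ∧ ∀ x ∈ s, lap u x = 0

/-- Wirtinger derivative `∂/∂z` read off from a real differential. -/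
noncomputable def wirtZ (L : ℂ →L[ℝ] ℂ) : ℂ := (L 1 - Complex.I * L Complex.I) / 2

/-- Wirtinger derivative `∂/∂z̄` read off from a real differential. -/
noncomputable def wirtZbar (L : ℂ →L[ℝ] ℂ) : ℂ := (L 1 + Complex.I * L Complex.I) / 2

/-!
Write `h z = χ (‖z‖²) • z`, where `χ s = s^(-1/2)` for `s ≤ 1` and `χ s = (s + 1) / (2 s)` for
`s ≥ 1`. Both pieces have derivative `-1/2` at `s = 1`, so `χ` is `C¹` on `(0, ∞)` and `h` is `C¹`
off the origin, with `Dh(z) v = χ v + 2 χ' ⟪z, v⟫ z`. Hence `h_z = χ + s χ'` and `h_z̄ = χ' z²`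
(with `s = ‖z‖²`), and on both pieces `(χ + s χ') χ' = -1 / (4 s²)`, which is the Hopf differential
identity since `z̄² / s² = 1 / z²`.

If `h` were harmonic on the punctured disk, so would be `Re h = Re z / ‖z‖`, and by the mean value
property its average over the circle of radius `1/4` about `1/2` would be `Re h (1/2) = 1`. But
`Re h ≤ 1` on that circle, with strict inequality off the real axis.
-/

open InnerProductSpace Laplacian Metric Real Set

section Laplacian

variable {E : Type*} [NormedAddCommGroup E] [NormedSpace ℝ E]

theorem fderiv_fderiv_apply_apply {F : Type*} [NormedAddCommGroup F] [NormedSpace ℝ F]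
    {u : F → E} {x : F} (hu : DifferentiableAt ℝ (fderiv ℝ u) x) (v w : F) :
    fderiv ℝ (fun y => fderiv ℝ u y v) x w = fderiv ℝ (fderiv ℝ u) x w v := by
  rw [fderiv_clm_apply hu (differentiableAt_const v)]
  simp

theorem ContDiffAt.lap_eq_laplacian {u : ℂ → E} {x : ℂ} (hu : ContDiffAt ℝ 2 u x) :
    lap u x = Δ u x := by
  have hdiff : DifferentiableAt ℝ (fderiv ℝ u) x :=
    (hu.fderiv_right (m := 1) (by norm_num)).differentiableAt one_ne_zero
  simp [lap, laplacian_eq_iteratedFDeriv_complexPlane, iteratedFDeriv_two_apply,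
    fderiv_fderiv_apply_apply hdiff]

theorem HarmonicOn.harmonicOnNhd {u : ℂ → E} {s : Set ℂ} (hs : IsOpen s) (hu : HarmonicOn u s) :
    HarmonicOnNhd u s := by
  intro x hx
  refine ⟨hu.1.contDiffAt (hs.mem_nhds hx), ?_⟩
  filter_upwards [hs.mem_nhds hx] with y hy
  rw [← (hu.1.contDiffAt (hs.mem_nhds hy)).lap_eq_laplacian]
  exact hu.2 y hy

end Laplacian

theorem circleAverage_lt_of_le_of_lt {f : ℂ → ℝ} {c : ℂ} {R a θ₀ : ℝ}
    (hf : ContinuousOn f (sphere c |R|)) (hle : ∀ z ∈ sphere c |R|, f z ≤ a)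
    (hlt : f (circleMap c R θ₀) < a) : circleAverage f c R < a := by
  have hcont : Continuous fun θ => f (circleMap c R (θ + θ₀)) :=
    hf.comp_continuous (by fun_prop) fun θ => circleMap_mem_sphere' c R _
  have hint : ∫ θ in 0..2 * π, f (circleMap c R (θ + θ₀)) < ∫ θ in 0..2 * π, a :=
    intervalIntegral.integral_lt_integral_of_continuousOn_of_le_of_exists_lt (by positivity)
      hcont.continuousOn continuousOn_const (fun θ _ => hle _ (circleMap_mem_sphere' c R _))
      ⟨0, ⟨le_rfl, by positivity⟩, by simpa using hlt⟩
  rw [intervalIntegral.integral_const, smul_eq_mul, sub_zero] at hint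
  rw [circleAverage_eq_integral_add θ₀, smul_eq_mul]
  calc (2 * π)⁻¹ * ∫ θ in 0..2 * π, f (circleMap c R (θ + θ₀))
      < (2 * π)⁻¹ * (2 * π * a) := by gcongr
    _ = a := by field_simp

noncomputable def radialProfile (s : ℝ) : ℝ := if s ≤ 1 then (√s)⁻¹ else (s + 1) / (2 * s)

noncomputable def radialProfileDeriv (s : ℝ) : ℝ := -1 / (2 * s * max √s s)

lemma radialProfileDeriv_of_le_one {s : ℝ} (h : s ≤ 1) :
    radialProfileDeriv s = -1 / (2 * s * √s) := by
  rw [radialProfileDeriv, max_eq_left (le_sqrt_self_iff.2 h)]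

lemma radialProfileDeriv_of_one_le {s : ℝ} (h : 1 ≤ s) :
    radialProfileDeriv s = -1 / (2 * s * s) := by
  rw [radialProfileDeriv, max_eq_right (sqrt_le_self_iff.2 (Or.inr h))]

lemma hasDerivAt_inv_sqrt {s : ℝ} (hs : 0 < s) :
    HasDerivAt (fun r => (√r)⁻¹) (-1 / (2 * s * √s)) s := by
  refine ((hasDerivAt_sqrt hs.ne').inv (sqrt_ne_zero'.2 hs)).congr_deriv ?_
  have := sqrt_pos.2 hs
  field_simp
  rw [sq_sqrt hs.le]

lemma hasDerivAt_add_one_div_two_mul {s : ℝ} (hs : 0 < s) :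
    HasDerivAt (fun r => (r + 1) / (2 * r)) (-1 / (2 * s * s)) s := by
  refine (((hasDerivAt_id s).add_const 1).div ((hasDerivAt_id s).const_mul 2)
    (by positivity)).congr_deriv ?_
  simp only [id]
  field_simp
  ring

lemma hasDerivAt_radialProfile {s : ℝ} (hs : 0 < s) :
    HasDerivAt radialProfile (radialProfileDeriv s) s := by
  rcases lt_trichotomy s 1 with h | rfl | h
  · rw [radialProfileDeriv_of_le_one h.le]
    refine (hasDerivAt_inv_sqrt hs).congr_of_eventuallyEq ?_
    filter_upwards [eventually_le_nhds h] with r hr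
    simp [radialProfile, hr]
  · have hleft : HasDerivWithinAt radialProfile (-1 / 2) (Iic 1) 1 := by
      refine ((hasDerivAt_inv_sqrt hs).hasDerivWithinAt.congr (fun r hr => ?_) ?_).congr_deriv ?_
      · simp [radialProfile, mem_Iic.1 hr]
      · simp [radialProfile]
      · norm_num
    have hright : HasDerivWithinAt radialProfile (-1 / 2) (Ici 1) 1 := by
      refine ((hasDerivAt_add_one_div_two_mul hs).hasDerivWithinAt.congr
        (fun r hr => ?_) ?_).congr_deriv ?_
      · rcases (mem_Ici.1 hr).eq_or_lt with rfl | hr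
        · norm_num [radialProfile]
        · simp [radialProfile, hr.not_ge]
      · norm_num [radialProfile]
      · norm_num
    have := hleft.union hright
    rw [Iic_union_Ici, hasDerivWithinAt_univ] at this
    rwa [radialProfileDeriv_of_one_le le_rfl, show -1 / (2 * 1 * 1 : ℝ) = -1 / 2 by norm_num]
  · rw [radialProfileDeriv_of_one_le h.le]
    refine (hasDerivAt_add_one_div_two_mul hs).congr_of_eventuallyEq ?_
    filter_upwards [eventually_gt_nhds h] with r hr
    simp [radialProfile, hr.not_ge]

lemma continuousOn_radialProfileDeriv : ContinuousOn radialProfileDeriv (Ioi 0) :=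
  continuousOn_const.div (by fun_prop) fun s (hs : 0 < s) =>
    (mul_pos (mul_pos two_pos hs) (lt_max_of_lt_right hs)).ne'

lemma contDiffOn_radialProfile : ContDiffOn ℝ 1 radialProfile (Ioi 0) := by
  have hderiv : EqOn (deriv radialProfile) radialProfileDeriv (Ioi 0) :=
    fun s hs => (hasDerivAt_radialProfile hs).deriv
  rw [show (1 : WithTop ℕ∞) = 0 + 1 from rfl, contDiffOn_succ_iff_deriv_of_isOpen isOpen_Ioi]
  refine ⟨fun s hs => (hasDerivAt_radialProfile hs).differentiableAt.differentiableWithinAt,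
    by simp, ?_⟩
  rw [contDiffOn_congr hderiv, contDiffOn_zero]
  exact continuousOn_radialProfileDeriv

lemma radialProfile_add_mul_deriv_mul_deriv {s : ℝ} (hs : 0 < s) :
    (radialProfile s + s * radialProfileDeriv s) * radialProfileDeriv s = -1 / (4 * s ^ 2) := by
  have hsqrt : √s * √s = s := mul_self_sqrt hs.le
  have := sqrt_pos.2 hs
  by_cases h : s ≤ 1
  · rw [radialProfile, if_pos h, radialProfileDeriv_of_le_one h]
    field_simp
    nlinarith
  · rw [radialProfile, if_neg h, radialProfileDeriv_of_one_le (le_of_not_ge h)]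
    field_simp
    ring

noncomputable def radialMap (z : ℂ) : ℂ := radialProfile (‖z‖ ^ 2) • z

lemma radialMap_of_norm_le_one {z : ℂ} (hz : ‖z‖ ≤ 1) : radialMap z = z / ‖z‖ := by
  have hs : ‖z‖ ^ 2 ≤ 1 := pow_le_one₀ (norm_nonneg z) hz
  rw [radialMap, radialProfile, if_pos hs, sqrt_sq (norm_nonneg z), real_smul,
    div_eq_inv_mul, ofReal_inv]

lemma radialMap_of_one_lt_norm {z : ℂ} (hz : 1 < ‖z‖) :
    radialMap z = (z + 1 / (starRingEnd ℂ) z) / 2 := by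
  have hs : ¬ ‖z‖ ^ 2 ≤ 1 := by nlinarith
  have hz0 : z ≠ 0 := norm_pos_iff.1 (one_pos.trans hz)
  have hconj : (starRingEnd ℂ) z ≠ 0 := by simpa using hz0
  rw [radialMap, radialProfile, if_neg hs, real_smul, ← normSq_eq_norm_sq]
  push_cast
  rw [← mul_conj]
  field_simp

lemma piecewise_eq_radialMap :
    (fun z : ℂ => if ‖z‖ ≤ 1 then z / (‖z‖ : ℂ) else (z + 1 / (starRingEnd ℂ) z) / 2) =
      radialMap := by
  funext z
  split_ifs with hz
  · exact (radialMap_of_norm_le_one hz).symm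
  · exact (radialMap_of_one_lt_norm (not_le.1 hz)).symm

lemma contDiffOn_radialMap : ContDiffOn ℝ 1 radialMap {z | z ≠ 0} :=
  (contDiffOn_radialProfile.comp (contDiff_norm_sq ℝ).contDiffOn
    fun _ hz => pow_pos (norm_pos_iff.2 hz) 2).smul contDiffOn_id

lemma hasFDerivAt_radialMap {z : ℂ} (hz : z ≠ 0) :
    HasFDerivAt radialMap (radialProfile (‖z‖ ^ 2) • ContinuousLinearMap.id ℝ ℂ +
      ((2 * radialProfileDeriv (‖z‖ ^ 2)) • innerSL ℝ z).smulRight z) z := by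
  refine (((hasDerivAt_radialProfile (by positivity)).comp_hasFDerivAt z
    (hasStrictFDerivAt_norm_sq z).hasFDerivAt).smul (hasFDerivAt_id z)).congr_fderiv ?_
  ext v
  simp only [add_apply, smul_apply, ContinuousLinearMap.smulRight_apply, Function.comp_apply, id,
    smul_eq_mul, nsmul_eq_mul]
  push_cast
  ring

lemma wirtZ_smul_id_add_smulRight (a b : ℝ) (z : ℂ) :
    wirtZ (a • ContinuousLinearMap.id ℝ ℂ + (b • innerSL ℝ z).smulRight z) =
      ((a + b * ‖z‖ ^ 2 / 2 : ℝ) : ℂ) := by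
  rw [← normSq_eq_norm_sq]
  apply Complex.ext <;> simp [wirtZ, normSq_apply] <;> ring

lemma wirtZbar_smul_id_add_smulRight (a b : ℝ) (z : ℂ) :
    wirtZbar (a • ContinuousLinearMap.id ℝ ℂ + (b • innerSL ℝ z).smulRight z) =
      b * z ^ 2 / 2 := by
  apply Complex.ext <;> simp [wirtZbar, sq] <;> ring

lemma wirtZ_mul_conj_wirtZbar_radialMap {z : ℂ} (hz : z ≠ 0) :
    wirtZ (fderiv ℝ radialMap z) * (starRingEnd ℂ) (wirtZbar (fderiv ℝ radialMap z)) =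
      -1 / (4 * z ^ 2) := by
  have hs : 0 < ‖z‖ ^ 2 := by positivity
  have hnorm : ((‖z‖ : ℂ) ^ 2) ^ 2 = z ^ 2 * (starRingEnd ℂ) z ^ 2 := by
    rw [← mul_conj']
    ring
  have hconj : (starRingEnd ℂ) z ≠ 0 := by simpa using hz
  rw [(hasFDerivAt_radialMap hz).fderiv, wirtZ_smul_id_add_smulRight,
    wirtZbar_smul_id_add_smulRight]
  calc _ = (((radialProfile (‖z‖ ^ 2) + ‖z‖ ^ 2 * radialProfileDeriv (‖z‖ ^ 2)) *
        radialProfileDeriv (‖z‖ ^ 2) : ℝ) : ℂ) * (starRingEnd ℂ) z ^ 2 := by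
        simp only [map_div₀, map_mul, map_pow, conj_ofReal, map_ofNat]
        push_cast
        ring
    _ = -1 / (4 * z ^ 2) := by
        rw [radialProfile_add_mul_deriv_mul_deriv hs]
        push_cast
        rw [hnorm]
        field_simp

lemma re_radialMap_le_one {z : ℂ} (hz : ‖z‖ ≤ 1) : (radialMap z).re ≤ 1 := by
  rw [radialMap_of_norm_le_one hz, div_ofReal_re]
  exact div_le_one_of_le₀ (re_le_norm z) (norm_nonneg z)

lemma re_radialMap_lt_one {z : ℂ} (hz : ‖z‖ ≤ 1) (him : z.im ≠ 0) : (radialMap z).re < 1 := by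
  have hz0 : z ≠ 0 := fun h => him (by simp [h])
  rw [radialMap_of_norm_le_one hz, div_ofReal_re, div_lt_one (norm_pos_iff.2 hz0)]
  exact (le_abs_self _).trans_lt (abs_re_lt_norm.2 him)

lemma closedBall_half_quarter_subset : closedBall (1 / 2 : ℂ) |1 / 4| ⊆ ball 0 1 \ {0} := by
  intro z hz
  rw [mem_closedBall, abs_of_pos (by norm_num), dist_eq_norm] at hz
  refine ⟨?_, ?_⟩
  · calc dist z 0 = ‖(z - 1 / 2) + 1 / 2‖ := by simp
      _ ≤ ‖z - 1 / 2‖ + ‖(1 / 2 : ℂ)‖ := norm_add_le _ _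
      _ < 1 := by norm_num; linarith
  · rintro rfl
    norm_num at hz

lemma not_harmonicOn_radialMap : ¬ HarmonicOn radialMap (ball 0 1 \ {0}) := by
  intro hharm
  have hdisk := closedBall_half_quarter_subset
  have hnorm : ∀ z ∈ sphere (1 / 2 : ℂ) |1 / 4|, ‖z‖ ≤ 1 := fun z hz =>
    (mem_ball_zero_iff.1 (hdisk (sphere_subset_closedBall hz)).1).le
  have hre : HarmonicOnNhd (reCLM ∘ radialMap) (closedBall (1 / 2) |1 / 4|) :=
    ((hharm.harmonicOnNhd (isOpen_ball.sdiff isClosed_singleton)).mono hdisk).comp_CLM reCLM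
  have hlt : (reCLM ∘ radialMap) (circleMap (1 / 2) (1 / 4) (π / 2)) < 1 :=
    re_radialMap_lt_one (hnorm _ (circleMap_mem_sphere' _ _ _)) (by simp [circleMap_pi_div_two])
  have := circleAverage_lt_of_le_of_lt (hre.continuousOn.mono sphere_subset_closedBall)
    (fun z hz => re_radialMap_le_one (hnorm z hz)) hlt
  rw [hre.circleAverage_eq] at this
  norm_num [radialMap_of_norm_le_one] at this

/-- The mapping `h(z) = z/|z|` for `|z| ≤ 1`, `h(z) = (z + 1/z̄)/2` for `|z| ≥ 1`
on the punctured plane is continuous, lies in `W^{1,2}_loc`, has Hopf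
differential `h_z conj(h_z̄) = -1/(4z²)` a.e. (which is holomorphic), yet `h` is
not harmonic on the punctured unit disk. -/
theorem stmt5 (h : ℂ → ℂ)
    (hdef : h = fun z => if ‖z‖ ≤ 1 then z / (‖z‖ : ℂ)
      else (z + 1 / (starRingEnd ℂ) z) / 2) :
    ContinuousOn h {z : ℂ | z ≠ 0} ∧
    (∀ K : Set ℂ, K ⊆ {z : ℂ | z ≠ 0} → IsCompact K →
      IntegrableOn (fun z => ‖h z‖ ^ 2 + ‖fderiv ℝ h z‖ ^ 2) K volume) ∧
    (∀ᵐ z ∂(volume : Measure ℂ), z ≠ 0 →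
      DifferentiableAt ℝ h z ∧
      wirtZ (fderiv ℝ h z) * (starRingEnd ℂ) (wirtZbar (fderiv ℝ h z))
        = -1 / (4 * z ^ 2)) ∧
    DifferentiableOn ℂ (fun z => -1 / (4 * z ^ 2)) {z : ℂ | z ≠ 0} ∧
    ¬ HarmonicOn h (Metric.ball (0 : ℂ) 1 \ {0}) := by
  subst hdef
  rw [piecewise_eq_radialMap]
  have hC1 := contDiffOn_radialMap
  refine ⟨hC1.continuousOn, fun K hK hKc => ?_, ?_, ?_, not_harmonicOn_radialMap⟩
  · have hderiv : ContinuousOn (fderiv ℝ radialMap) {z | z ≠ 0} :=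
      hC1.continuousOn_fderiv_of_isOpen isOpen_ne le_rfl
    have hcont : ContinuousOn (fun z => ‖radialMap z‖ ^ 2 + ‖fderiv ℝ radialMap z‖ ^ 2)
        {z | z ≠ 0} :=
      (hC1.continuousOn.norm.pow 2).add (hderiv.norm.pow 2)
    exact (hcont.mono hK).integrableOn_compact hKc
  · exact Filter.Eventually.of_forall fun z hz =>
      ⟨(hasFDerivAt_radialMap hz).differentiableAt, wirtZ_mul_conj_wirtZbar_radialMap hz⟩
  · exact (differentiableOn_const _).div (by fun_prop) fun z hz =>
      mul_ne_zero (by norm_num) (pow_ne_zero 2 hz)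
end

section
/- Let β : ℝ → (0,∞) be smooth with |β'| ≤ 1/(40M), let V(β) = {(x,y) : |y| < β(x)}, and let u : V(β) → ℝ be M-Lipschitz with u(x,0) = x. Fix a smooth nondecreasing α : ℝ → [0,1] with α(t) = 0 for t ≤ 1/3, α(t) = 1 for t ≥ 2/3 and α' ≤ 4 everywhere. Define ũ(x,y) = α(|y|/β(x))·u(x,y) + (1 − α(|y|/β(x)))·x on V(β) ∖ {y=0}. Then 8/10 ≤ ∂ũ/∂x ≤ 12/10 and |∂ũ/∂y| ≤ 5M, provided additionally |u_x − 1| ≤ 1/10 on V(β)∖{y=0}. -/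
open Complex

/-- The interpolated modification `ũ(x,y) = α(|y|/β(x))·u(x,y) + (1 − α(|y|/β(x)))·x`. -/
noncomputable def utilde (α β : ℝ → ℝ) (u : ℝ × ℝ → ℝ) : ℝ × ℝ → ℝ :=
  fun p => α (|p.2| / β p.1) * u p + (1 - α (|p.2| / β p.1)) * p.1

lemma mono_deriv_nonneg {f : ℝ → ℝ} (hf : Monotone f) (t : ℝ) : 0 ≤ deriv f t := by
  by_cases hd : DifferentiableAt ℝ f t
  · have H : Filter.Tendsto (slope f t) (nhdsWithin t (Set.Ioi t)) (nhds (deriv f t)) :=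
      (hasDerivAt_iff_tendsto_slope.1 hd.hasDerivAt).mono_left
        (nhdsWithin_mono _ (fun z hz => ne_of_gt hz))
    refine ge_of_tendsto H ?_
    filter_upwards [self_mem_nhdsWithin] with z hz
    have hz' : (0:ℝ) < z - t := sub_pos.2 hz
    have h2 : 0 ≤ f z - f t := sub_nonneg.2 (hf (le_of_lt hz))
    simp only [slope_def_field, div_eq_mul_inv]
    positivity
  · simp [deriv_zero_of_not_differentiableAt hd]

/-- Derivative estimates for the cut-off modification `ũ` of an `M`-Lipschitz
function `u` with `u(x,0) = x` on the region `V(β) = {|y| < β(x)}`: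
`8/10 ≤ ũ_x ≤ 12/10` and `|ũ_y| ≤ 5M`. -/
theorem stmt17 (M : ℝ) (hM : 0 < M)
    (β : ℝ → ℝ) (hβpos : ∀ x, 0 < β x) (hβsmooth : ContDiff ℝ (⊤ : ℕ∞) β)
    (hβ' : ∀ x, |deriv β x| ≤ 1 / (40 * M))
    (α : ℝ → ℝ) (hαsmooth : ContDiff ℝ (⊤ : ℕ∞) α) (hαmono : Monotone α)
    (hα0 : ∀ t : ℝ, t ≤ 1 / 3 → α t = 0) (hα1 : ∀ t : ℝ, 2 / 3 ≤ t → α t = 1)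
    (hα' : ∀ t : ℝ, deriv α t ≤ 4)
    (u : ℝ × ℝ → ℝ)
    (hLip : LipschitzOnWith (Real.toNNReal M) u {p : ℝ × ℝ | |p.2| < β p.1})
    (hu0 : ∀ x : ℝ, u (x, 0) = x)
    (hdiff : ∀ p : ℝ × ℝ, |p.2| < β p.1 → p.2 ≠ 0 → DifferentiableAt ℝ u p)
    (hux : ∀ p : ℝ × ℝ, |p.2| < β p.1 → p.2 ≠ 0 →
      |fderiv ℝ u p (1, 0) - 1| ≤ 1 / 10) :
    ∀ p : ℝ × ℝ, |p.2| < β p.1 → p.2 ≠ 0 →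
      (8 / 10 ≤ fderiv ℝ (utilde α β u) p (1, 0) ∧
       fderiv ℝ (utilde α β u) p (1, 0) ≤ 12 / 10 ∧
       |fderiv ℝ (utilde α β u) p (0, 1)| ≤ 5 * M) := by
  intro p hp hy
  obtain ⟨x, y⟩ := p
  simp only at hp hy
  have hb : 0 < β x := hβpos x
  set s : ℝ := if 0 ≤ y then 1 else -1 with hs
  have hsy : s * y = |y| := by
    rcases le_or_gt 0 y with h | h
    · rw [hs, if_pos h, one_mul, _root_.abs_of_nonneg h]
    · rw [hs, if_neg (not_le.2 h), neg_one_mul, abs_of_neg h]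
  have hsypos : 0 < s * y := by rw [hsy]; exact abs_pos.2 hy
  set t0 : ℝ := s * y * (β x)⁻¹ with ht0def
  have ht0abs : t0 = |y| / β x := by rw [ht0def, hsy, div_eq_mul_inv]
  have ht0pos : 0 < t0 := mul_pos hsypos (inv_pos.2 hb)
  have ht0lt1 : t0 < 1 := by rw [ht0abs]; exact (div_lt_one hb).2 hp
  -- α facts
  have ha0 : 0 ≤ α t0 := by
    have h0 := hα0 0 (by norm_num)
    calc (0:ℝ) = α 0 := h0.symm
    _ ≤ α t0 := hαmono ht0pos.le
  have ha1 : α t0 ≤ 1 := by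
    rcases le_or_gt t0 (2/3) with h | h
    · calc α t0 ≤ α (2/3) := hαmono h
      _ = 1 := hα1 _ le_rfl
    · exact le_of_eq (hα1 _ h.le)
  have ha'0 : 0 ≤ deriv α t0 := mono_deriv_nonneg hαmono t0
  have ha'4 : deriv α t0 ≤ 4 := hα' t0
  -- Lipschitz facts
  have hMset : ((Real.toNNReal M : NNReal) : ℝ) = M := Real.coe_toNNReal M hM.le
  have hSopen : IsOpen {p : ℝ × ℝ | |p.2| < β p.1} :=
    isOpen_lt (continuous_snd.abs) (hβsmooth.continuous.comp continuous_fst)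
  have hmem : ((x, y) : ℝ × ℝ) ∈ {p : ℝ × ℝ | |p.2| < β p.1} := hp
  have hmem0 : ((x, 0) : ℝ × ℝ) ∈ {p : ℝ × ℝ | |p.2| < β p.1} := by
    simp only [Set.mem_setOf_eq, abs_zero]; exact hb
  have hub : |u (x, y) - x| ≤ M * |y| := by
    have h := hLip.dist_le_mul (x, y) hmem (x, 0) hmem0
    rw [hu0 x] at h
    simpa [Real.dist_eq, Prod.dist_eq, hMset] using h
  set Du := fderiv ℝ u (x, y) with hDu
  have hudiff : DifferentiableAt ℝ u (x, y) := hdiff (x, y) hp hy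
  have hDunorm : ‖Du‖ ≤ M := by
    have h := hudiff.hasFDerivAt.le_of_lipschitzOn (hSopen.mem_nhds hmem) hLip
    rwa [hMset] at h
  have hn01 : ‖((0:ℝ), (1:ℝ))‖ = 1 := by simp [Prod.norm_def]
  have huy : |Du (0, 1)| ≤ M := by
    calc |Du (0, 1)| ≤ ‖Du‖ * ‖((0:ℝ), (1:ℝ))‖ := Du.le_opNorm _
    _ = ‖Du‖ := by rw [hn01, mul_one]
    _ ≤ M := hDunorm
  have huxb : |Du (1, 0) - 1| ≤ 1 / 10 := hux (x, y) hp hy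
  -- local expression for utilde
  have hU : IsOpen {q : ℝ × ℝ | 0 < s * q.2} :=
    isOpen_lt continuous_const (continuous_const.mul continuous_snd)
  have hpU : ((x, y) : ℝ × ℝ) ∈ {q : ℝ × ℝ | 0 < s * q.2} := hsypos
  have heq : utilde α β u =ᶠ[nhds ((x, y) : ℝ × ℝ)]
      (fun q => α (s * q.2 * (β q.1)⁻¹) * u q + (1 - α (s * q.2 * (β q.1)⁻¹)) * q.1) := by
    filter_upwards [hU.mem_nhds hpU] with q hq
    have habs : |q.2| = s * q.2 := by
      rcases le_or_gt 0 y with h | h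
      · simp only [hs, if_pos h, one_mul] at hq ⊢
        exact abs_of_pos hq
      · simp only [hs, if_neg (not_le.2 h), neg_one_mul] at hq ⊢
        rw [abs_of_neg (by linarith)]
    simp [utilde, habs, div_eq_mul_inv]
  -- derivatives
  have hβd : HasDerivAt β (deriv β x) x := (hβsmooth.differentiable (by simp) x).hasDerivAt
  have hβinv : HasDerivAt (fun z => (β z)⁻¹) (-(deriv β x) / (β x) ^ 2) x := hβd.inv hb.ne'
  have hden : HasFDerivAt (fun q : ℝ × ℝ => (β q.1)⁻¹)
      ((-(deriv β x) / (β x) ^ 2) • ContinuousLinearMap.fst ℝ ℝ ℝ) (x, y) :=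
    hβinv.comp_hasFDerivAt (h₂ := fun z => (β z)⁻¹) (f := Prod.fst) (x, y) hasFDerivAt_fst
  have hnum : HasFDerivAt (fun q : ℝ × ℝ => s * q.2)
      (s • ContinuousLinearMap.snd ℝ ℝ ℝ) (x, y) := hasFDerivAt_snd.const_mul s
  set LT : ℝ × ℝ →L[ℝ] ℝ :=
    (s * y) • ((-(deriv β x) / (β x) ^ 2) • ContinuousLinearMap.fst ℝ ℝ ℝ) +
      (β x)⁻¹ • (s • ContinuousLinearMap.snd ℝ ℝ ℝ) with hLT
  have hT : HasFDerivAt (fun q : ℝ × ℝ => s * q.2 * (β q.1)⁻¹) LT (x, y) := hnum.mul hden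
  have hαd : HasDerivAt α (deriv α t0) t0 := (hαsmooth.differentiable (by simp) t0).hasDerivAt
  have hA : HasFDerivAt (fun q : ℝ × ℝ => α (s * q.2 * (β q.1)⁻¹))
      (deriv α t0 • LT) (x, y) := by
    exact HasDerivAt.comp_hasFDerivAt ((x, y) : ℝ × ℝ) hαd hT
  have h1 : HasFDerivAt (fun q : ℝ × ℝ => α (s * q.2 * (β q.1)⁻¹) * u q)
      (α t0 • Du + u (x, y) • (deriv α t0 • LT)) (x, y) := hA.mul hudiff.hasFDerivAt
  have h2 : HasFDerivAt (fun q : ℝ × ℝ => (1 - α (s * q.2 * (β q.1)⁻¹)) * q.1)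
      ((1 - α t0) • ContinuousLinearMap.fst ℝ ℝ ℝ + x • (0 - deriv α t0 • LT)) (x, y) :=
    ((hasFDerivAt_const (1 : ℝ) _).sub hA).mul hasFDerivAt_fst
  have hfd : fderiv ℝ (utilde α β u) (x, y) =
      (α t0 • Du + u (x, y) • (deriv α t0 • LT)) +
        ((1 - α t0) • ContinuousLinearMap.fst ℝ ℝ ℝ + x • (0 - deriv α t0 • LT)) := by
    rw [heq.fderiv_eq]
    exact (h1.add h2).fderiv
  -- evaluate
  have e1 : fderiv ℝ (utilde α β u) (x, y) (1, 0) =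
      1 + α t0 * (Du (1, 0) - 1) +
        deriv α t0 * ((s * y) * ((u (x, y) - x) * (-(deriv β x) / (β x) ^ 2))) := by
    rw [hfd]
    simp only [ContinuousLinearMap.add_apply, ContinuousLinearMap.smul_apply,
      ContinuousLinearMap.sub_apply, ContinuousLinearMap.zero_apply,
      ContinuousLinearMap.coe_fst', ContinuousLinearMap.coe_snd', hLT, smul_eq_mul]
    ring
  have e2 : fderiv ℝ (utilde α β u) (x, y) (0, 1) =
      deriv α t0 * (s * (β x)⁻¹ * (u (x, y) - x)) + α t0 * Du (0, 1) := by
    rw [hfd]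
    simp only [ContinuousLinearMap.add_apply, ContinuousLinearMap.smul_apply,
      ContinuousLinearMap.sub_apply, ContinuousLinearMap.zero_apply,
      ContinuousLinearMap.coe_fst', ContinuousLinearMap.coe_snd', hLT, smul_eq_mul]
    ring
  -- estimates
  have hβ'x : |deriv β x| ≤ 1 / (40 * M) := hβ' x
  have hybound : |y| ≤ β x := hp.le
  have ha'abs : |deriv α t0| ≤ 4 := by rw [_root_.abs_of_nonneg ha'0]; exact ha'4
  have key1 : |deriv α t0 * ((s * y) * ((u (x, y) - x) * (-(deriv β x) / (β x) ^ 2)))| ≤ 1 / 10 := by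
    have hfac : |deriv α t0 * ((s * y) * ((u (x, y) - x) * (-(deriv β x) / (β x) ^ 2)))|
        = |deriv α t0| * (|y| * (|u (x, y) - x| * (|deriv β x| / (β x) ^ 2))) := by
      have hsabs : |s| = 1 := by
        rcases le_or_gt 0 y with h | h <;> simp [hs, h, not_le.2]
      simp only [abs_mul, abs_div, abs_neg, _root_.abs_of_nonneg (sq_nonneg (β x)),
        hsabs, one_mul]
    rw [hfac]
    have h1 : |u (x, y) - x| ≤ M * β x := hub.trans (by gcongr)
    calc |deriv α t0| * (|y| * (|u (x, y) - x| * (|deriv β x| / (β x) ^ 2)))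
        ≤ 4 * (β x * ((M * β x) * ((1 / (40 * M)) / (β x) ^ 2))) := by
          gcongr <;>
            first
              | positivity
              | exact abs_nonneg _
              | exact ha'abs
              | exact hybound
              | exact h1
              | exact hβ'x
    _ = 1 / 10 := by field_simp; ring
  have key2 : |deriv α t0 * (s * (β x)⁻¹ * (u (x, y) - x))| ≤ 4 * M := by
    have hsabs : |s| = 1 := by rcases le_or_gt 0 y with h | h <;> simp [hs, h, not_le.2]
    rw [abs_mul, abs_mul, abs_mul, hsabs, one_mul, abs_inv, abs_of_pos hb]
    have h1 : |u (x, y) - x| ≤ M * β x := hub.trans (by gcongr)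
    calc |deriv α t0| * ((β x)⁻¹ * |u (x, y) - x|) ≤ 4 * ((β x)⁻¹ * (M * β x)) := by
          gcongr <;>
            first
              | positivity
              | exact abs_nonneg _
              | exact ha'abs
              | exact h1
    _ = 4 * M := by field_simp
  have habs1 : |α t0 * (Du (1, 0) - 1)| ≤ 1 / 10 := by
    rw [abs_mul, _root_.abs_of_nonneg ha0]
    calc α t0 * |Du (1, 0) - 1| ≤ 1 * (1 / 10) := by gcongr
    _ = 1 / 10 := by norm_num
  refine ⟨?_, ?_, ?_⟩
  · rw [e1]
    have := abs_le.1 habs1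
    have := abs_le.1 key1
    linarith [this.1]
  · rw [e1]
    have := abs_le.1 habs1
    have := abs_le.1 key1
    linarith [this.2]
  · rw [e2]
    have h3 : |α t0 * Du (0, 1)| ≤ M := by
      rw [abs_mul, _root_.abs_of_nonneg ha0]
      calc α t0 * |Du (0, 1)| ≤ 1 * M := by gcongr
      _ = M := one_mul M
    calc |deriv α t0 * (s * (β x)⁻¹ * (u (x, y) - x)) + α t0 * Du (0, 1)| ≤
        |deriv α t0 * (s * (β x)⁻¹ * (u (x, y) - x))| + |α t0 * Du (0, 1)| := abs_add_le _ _
    _ ≤ 4 * M + M := add_le_add key2 h3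
    _ = 5 * M := by ring
end
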